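/- arXiv:2204.07572 — 2 statements merged into one kernel-verified Lean document; each statement's English description precedes it below -/
import Mathlib

section
/- Let n0 ≥ 0, y0 ≥ 0, and suppose y, z : [0,∞) → ℝ are differentiable and satisfy y'(t) = n0 y(t) - z(t), z'(t) = n0 y(t) - z(t), y(0) = y0, z(0) = 0. Then y(t) - z(t) = y0 for all t, and y(t) = m(t) y0 where m(t) = 1 + n0 ∫_0^t e^{(n0-1)τ} dτ. -/
open Real intervalIntegral

lemma exp_int_key (c t : ℝ) :
    c * ∫ τ in (0:ℝ)..t, Real.exp (c * τ) = Real.exp (c * t) - 1 := by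
  have : ∫ τ in (0:ℝ)..t, c * Real.exp (c * τ) = Real.exp (c * t) - 1 := by
    have := intervalIntegral.integral_eq_sub_of_hasDerivAt
      (f := fun x => Real.exp (c * x)) (f' := fun x => c * Real.exp (c * x))
      (a := 0) (b := t)
      (fun x _ => by
        simpa [mul_comm, Function.comp_def] using
          (Real.hasDerivAt_exp (c * x)).comp x ((hasDerivAt_id x).const_mul c))
      (Continuous.intervalIntegrable (by continuity) _ _)
    simpa using this
  rw [← intervalIntegral.integral_const_mul, this]

lemma int_hasDeriv (c t : ℝ) :
    HasDerivAt (fun s => ∫ τ in (0:ℝ)..s, Real.exp (c * τ)) (Real.exp (c * t)) t := by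
  exact intervalIntegral.integral_hasDerivAt_right
    (Continuous.intervalIntegrable (by continuity) _ _)
    ((Continuous.stronglyMeasurableAtFilter (by continuity) _ _))
    (Continuous.continuousAt (by continuity))

/-- The mass / consumed-nutrient ODE system `y' = n0 y - z = z'`, `y(0) = y0`, `z(0) = 0`
yields `y - z ≡ y0` and the mass growth law `y(t) = m(t) y0`. -/
theorem stmt7 (n0 y0 : ℝ) (hn0 : 0 ≤ n0) (hy0 : 0 ≤ y0) (y z : ℝ → ℝ)
    (hy : ∀ t, HasDerivAt y (n0 * y t - z t) t)
    (hz : ∀ t, HasDerivAt z (n0 * y t - z t) t)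
    (hyinit : y 0 = y0) (hzinit : z 0 = 0) :
    ∀ t, y t - z t = y0 ∧
      y t = (1 + n0 * ∫ τ in (0:ℝ)..t, Real.exp ((n0 - 1) * τ)) * y0 := by
  set c := n0 - 1 with hc
  -- y - z is constant
  have hdz : ∀ t, HasDerivAt (fun t => y t - z t) 0 t := by
    intro t; have := (hy t).sub (hz t); rwa [sub_self] at this
  have hconst : ∀ t, y t - z t = y0 := by
    intro t
    have := is_const_of_deriv_eq_zero (f := fun t => y t - z t)
      (fun t => (hdz t).differentiableAt) (fun t => (hdz t).deriv) t 0
    simpa [hyinit, hzinit] using this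
  -- y' = c y + y0
  have hy' : ∀ t, HasDerivAt y (c * y t + y0) t := by
    intro t
    have h := hconst t
    have : n0 * y t - z t = c * y t + y0 := by rw [hc]; linarith
    simpa [this] using hy t
  -- the candidate solution
  set M : ℝ → ℝ := fun t => 1 + n0 * ∫ τ in (0:ℝ)..t, Real.exp (c * τ) with hM
  have hM' : ∀ t, HasDerivAt M (n0 * Real.exp (c * t)) t := by
    intro t
    simpa [hM] using ((int_hasDeriv c t).const_mul n0).const_add 1
  -- w := (y - M y0) e^{-ct} has zero derivative
  set w : ℝ → ℝ := fun t => (y t - M t * y0) * Real.exp (-(c * t)) with hw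
  have hwderiv : ∀ t, HasDerivAt w 0 t := by
    intro t
    have hE : HasDerivAt (fun t => Real.exp (-(c * t))) (-c * Real.exp (-(c * t))) t := by
      simpa [mul_comm, Function.comp_def] using
        (Real.hasDerivAt_exp (-(c * t))).comp t (((hasDerivAt_id t).const_mul c).neg)
    have hA : HasDerivAt (fun t => y t - M t * y0)
        (c * y t + y0 - n0 * Real.exp (c * t) * y0) t :=
      (hy' t).sub ((hM' t).mul_const y0)
    have := hA.mul hE
    convert this using 1
    · rfl
    · rfl
    · rfl
    have key := exp_int_key c t
    have hMt : M t = 1 + n0 * ∫ τ in (0:ℝ)..t, Real.exp (c * τ) := rfl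
    set I := ∫ τ in (0:ℝ)..t, Real.exp (c * τ)
    have hcn : c = n0 - 1 := hc
    rw [hMt]
    have : c * I = Real.exp (c * t) - 1 := key
    linear_combination (-(n0 * Real.exp (-(c*t)) * y0)) * this - Real.exp (-(c*t)) * y0 * hcn
  have hw0 : w 0 = 0 := by
    simp [hw, hM, hyinit]
  have hwconst : ∀ t, w t = 0 := by
    intro t
    have := is_const_of_deriv_eq_zero (f := w)
      (fun t => (hwderiv t).differentiableAt) (fun t => (hwderiv t).deriv) t 0
    rw [this, hw0]
  intro t
  refine ⟨hconst t, ?_⟩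
  have h := hwconst t
  have hexp : Real.exp (-(c * t)) ≠ 0 := Real.exp_ne_zero _
  have : y t - M t * y0 = 0 := by
    rcases mul_eq_zero.1 h with h' | h'
    · exact h'
    · exact absurd h' hexp
  have : y t = M t * y0 := by linarith
  simpa [hM, hc] using this
end

section
/- Let r > 0 and let Ω ⊂ ℝ^d be a bounded open set containing the closed ball B̄_r(0) and satisfying the r-reflection property: for every affine hyperplane H whose open half-space H⁻ (the side containing 0) contains B_r(0), the reflection across H of Ω ∩ H⁺ is contained in Ω ∩ H⁻. Then for every x ∈ ∂Ω, the open cone x + C(x, φ_x) is contained in the complement of Ω, where C(v,θ) = { y : ⟨v,y⟩ ≥ cos θ · |v||y| } and cos φ_x = r/|x|. -/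
open scoped RealInnerProductSpace

/-- Exterior cone property for sets with the `r`-reflection property: every boundary point
`x` of `Ω` admits the exterior cone `x + C(x, φ_x)` with `cos φ_x = r/|x|`. -/
theorem stmt13 (d : ℕ) (r : ℝ) (hr : 0 < r) (Ω : Set (EuclideanSpace ℝ (Fin d)))
    (hopen : IsOpen Ω) (hbdd : Bornology.IsBounded Ω)
    (hball : Metric.closedBall 0 r ⊆ Ω)
    (hrefl : ∀ ν y₀ : EuclideanSpace ℝ (Fin d), ‖ν‖ = 1 →
      Metric.ball 0 r ⊆ {z | ⟪z - y₀, ν⟫ < 0} →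
      ∀ x ∈ Ω, 0 < ⟪x - y₀, ν⟫ →
        (x - (2 * ⟪x - y₀, ν⟫) • ν) ∈ Ω ∧
          ⟪(x - (2 * ⟪x - y₀, ν⟫) • ν) - y₀, ν⟫ < 0) :
    ∀ x ∈ frontier Ω, ∀ z : EuclideanSpace ℝ (Fin d),
      ⟪x, z⟫ ≥ (r / ‖x‖) * (‖x‖ * ‖z‖) → x + z ∉ Ω := by
  intro x hx z hcone hmem
  have hxnot : x ∉ Ω := by
    have := hopen.frontier_eq ▸ hx
    exact this.2
  by_cases hz : z = 0
  · exact hxnot (by simpa [hz] using hmem)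
  have hznorm : (0:ℝ) < ‖z‖ := norm_pos_iff.mpr hz
  have hx0 : x ≠ 0 := by
    intro h
    exact hxnot (hball (by simp [h, hr.le]))
  have hxnorm : (0:ℝ) < ‖x‖ := norm_pos_iff.mpr hx0
  have hkey : r * ‖z‖ ≤ ⟪x, z⟫ := by
    have h1 : (r / ‖x‖) * (‖x‖ * ‖z‖) = r * ‖z‖ := by
      field_simp
    linarith [hcone, h1.symm.le]
  set ν : EuclideanSpace ℝ (Fin d) := ‖z‖⁻¹ • z with hνdef
  set y₀ : EuclideanSpace ℝ (Fin d) := x + (2:ℝ)⁻¹ • z with hy₀def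
  have hν : ‖ν‖ = 1 := by
    rw [hνdef, norm_smul]
    simp [abs_of_pos (inv_pos.mpr hznorm), inv_mul_cancel₀ hznorm.ne']
  have hb : Metric.ball 0 r ⊆ {w | ⟪w - y₀, ν⟫ < 0} := by
    intro w hw
    have hwr : ‖w‖ < r := by simpa using hw
    have hwz : ⟪w, z⟫ < r * ‖z‖ := by
      calc ⟪w, z⟫ ≤ ‖w‖ * ‖z‖ := real_inner_le_norm w z
        _ < r * ‖z‖ := by nlinarith
    have hzz : ⟪z, z⟫ = ‖z‖ ^ 2 := real_inner_self_eq_norm_sq z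
    have hcalc : ⟪w - y₀, ν⟫ = ‖z‖⁻¹ * (⟪w, z⟫ - ⟪x, z⟫ - 2⁻¹ * ⟪z, z⟫) := by
      rw [hνdef, hy₀def, real_inner_smul_right, inner_sub_left, inner_add_left,
        real_inner_smul_left]
      ring
    show ⟪w - y₀, ν⟫ < 0
    rw [hcalc]
    have hbr : ⟪w, z⟫ - ⟪x, z⟫ - 2⁻¹ * ⟪z, z⟫ < 0 := by nlinarith
    exact mul_neg_of_pos_of_neg (inv_pos.mpr hznorm) hbr
  have hpos : ⟪(x + z) - y₀, ν⟫ = 2⁻¹ * ‖z‖ := by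
    have he : (x + z) - y₀ = (2:ℝ)⁻¹ • z := by
      rw [hy₀def]; module
    rw [he, hνdef, real_inner_smul_left, real_inner_smul_right,
      real_inner_self_eq_norm_sq]
    field_simp
  obtain ⟨h1, -⟩ := hrefl ν y₀ hν hb (x + z) hmem (by rw [hpos]; positivity)
  rw [hpos] at h1
  have hptk : (x + z) - (2 * (2⁻¹ * ‖z‖)) • ν = x := by
    rw [hνdef, smul_smul]
    have : (2 * (2⁻¹ * ‖z‖)) * ‖z‖⁻¹ = 1 := by field_simp
    rw [this, one_smul]
    abel
  rw [hptk] at h1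
  exact hxnot h1
end
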